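/- Let (X, ρ) be a probability space and 𝒦 a matrix-valued kernel with sup_{x∈X} tr 𝒦(x,x) ≤ κ². Then the integral operator L_𝒦 f := ∫_X 𝒦(x, ·) f(x) dρ(x) on H_𝒦 is positive, self-adjoint, trace-class, and tr L_𝒦 ≤ κ². -/

import Mathlib

/-!
Writing `f(x) = Φ(x)† f`, one has `⟪L f, g⟫ = ∫ ⟪f(x), g(x)⟫ dρ`, which gives symmetry and
positivity at once. For an orthonormal family `(bᵢ)` and the standard basis `(e_k)`,
`Σᵢ ‖Φ(x)† bᵢ‖² = Σ_k Σᵢ ⟪bᵢ, Φ(x) e_k⟫² ≤ Σ_k ‖Φ(x) e_k‖² = tr 𝒦(x,x) ≤ κ²` by Bessel's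
inequality, and integrating against the probability measure `ρ` bounds every partial sum of
the trace by `κ²`.
-/

open scoped RealInnerProductSpace
open MeasureTheory ContinuousLinearMap

section

variable {X : Type*} [MeasurableSpace X] {ρ : Measure X}

/-- Since a non-integrable function has Bochner integral `0`, one non-integrable integrand
forces `L = 0`: if `T · f` were integrable, `T · (f + g)` could not be. -/
theorem ContinuousLinearMap.eq_zero_or_forall_integrable {E H : Type*}
    [NormedAddCommGroup E] [NormedSpace ℝ E] [NormedAddCommGroup H] [NormedSpace ℝ H]
    {L : E →L[ℝ] H} {T : X → E →L[ℝ] H} (hL : ∀ f, L f = ∫ x, T x f ∂ρ) :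
    L = 0 ∨ ∀ f, Integrable (fun x => T x f) ρ := by
  refine or_iff_not_imp_right.mpr fun hint => ?_
  obtain ⟨g, hg⟩ := not_forall.mp hint
  have hLg : L g = 0 := (hL g).trans (integral_undef hg)
  ext f
  by_cases hf : Integrable (fun x => T x f) ρ
  · have hfg : ¬Integrable (fun x => T x (f + g)) ρ := fun hfg =>
      hg <| (hfg.sub hf).congr (.of_forall fun x => by simp)
    have hLfg := (hL (f + g)).trans (integral_undef hfg)
    rwa [map_add, hLg, add_zero] at hLfg
  · exact (hL f).trans (integral_undef hf)

theorem ContinuousLinearMap.isPositive_of_inner_eq_integral {E H : Type*}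
    [NormedAddCommGroup E] [InnerProductSpace ℝ E] [NormedAddCommGroup H] [InnerProductSpace ℝ H]
    {L : H →L[ℝ] H} {S : X → H → E} (hL : ∀ f g, ⟪L f, g⟫ = ∫ x, ⟪S x f, S x g⟫ ∂ρ) :
    L.IsPositive := by
  refine (isPositive_iff L).mpr ⟨fun f g => ?_, fun f => ?_⟩
  · change ⟪L f, g⟫ = ⟪f, L g⟫
    rw [hL, real_inner_comm (L g), hL]
    congr with x
    exact real_inner_comm _ _
  · rw [hL]
    exact integral_nonneg fun x => real_inner_self_nonneg

theorem sum_integral_le_of_forall_sum_le [IsProbabilityMeasure ρ] {ι : Type*} {s : Finset ι}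
    {g : ι → X → ℝ} {C : ℝ} (hg : ∀ i ∈ s, Integrable (g i) ρ) (hC : ∀ x, ∑ i ∈ s, g i x ≤ C) :
    ∑ i ∈ s, ∫ x, g i x ∂ρ ≤ C := by
  rw [← integral_finsetSum s hg]
  calc ∫ x, ∑ i ∈ s, g i x ∂ρ ≤ ∫ _, C ∂ρ :=
        integral_mono (integrable_finsetSum s hg) (integrable_const C) hC
    _ = C := by simp

section Adjoint

variable {E H : Type*} [NormedAddCommGroup E] [InnerProductSpace ℝ E] [CompleteSpace E]
  [NormedAddCommGroup H] [InnerProductSpace ℝ H] [CompleteSpace H]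

theorem Orthonormal.sum_norm_adjoint_apply_sq_le {ι κ : Type*} [Fintype κ] {v : ι → H}
    (hv : Orthonormal ℝ v) (e : OrthonormalBasis κ ℝ E) (A : E →L[ℝ] H) (s : Finset ι) :
    ∑ i ∈ s, ‖adjoint A (v i)‖ ^ 2 ≤ ∑ k, ‖A (e k)‖ ^ 2 :=
  calc ∑ i ∈ s, ‖adjoint A (v i)‖ ^ 2 = ∑ k, ∑ i ∈ s, ⟪v i, A (e k)⟫ ^ 2 := by
        rw [Finset.sum_comm]
        refine Finset.sum_congr rfl fun i _ => ?_
        simp_rw [← e.sum_sq_inner_right, adjoint_inner_right, real_inner_comm (A _)]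
    _ ≤ ∑ k, ‖A (e k)‖ ^ 2 := Finset.sum_le_sum fun k _ => by
        simpa [sq_abs] using hv.sum_inner_products_le (A (e k)) (s := s)

variable {Φ : X → E →L[ℝ] H}

theorem inner_integral_apply_adjoint_apply {f : H}
    (hf : Integrable (fun x => Φ x (adjoint (Φ x) f)) ρ) (g : H) :
    ⟪∫ x, Φ x (adjoint (Φ x) f) ∂ρ, g⟫ = ∫ x, ⟪adjoint (Φ x) f, adjoint (Φ x) g⟫ ∂ρ := by
  rw [real_inner_comm, ← integral_inner hf g]
  congr with x
  rw [← adjoint_inner_left, real_inner_comm]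

theorem MeasureTheory.Integrable.norm_adjoint_apply_sq {f : H}
    (hf : Integrable (fun x => Φ x (adjoint (Φ x) f)) ρ) :
    Integrable (fun x => ‖adjoint (Φ x) f‖ ^ 2) ρ :=
  (hf.const_inner f).congr <| .of_forall fun x => by
    dsimp only
    rw [← adjoint_inner_left, real_inner_self_eq_norm_sq]

end Adjoint

end

/-- The kernel is modelled by feature maps `Φ x : ℝ^d →L H` (`c ↦ 𝒦(x,·)c`), so that
`f(x) = (Φ x)† f`, `tr 𝒦(x,x) = Σ_k ‖Φ x e_k‖²` and `L f = ∫ Φ x ((Φ x)† f) dρ`. -/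
theorem integral_operator_positive_trace_class
    {H : Type*} [NormedAddCommGroup H] [InnerProductSpace ℝ H] [CompleteSpace H]
    {X : Type*} [MeasurableSpace X] (ρ : Measure X) [IsProbabilityMeasure ρ]
    (d : ℕ) (Φ : X → (EuclideanSpace ℝ (Fin d)) →L[ℝ] H) (κ : ℝ)
    (htr : ∀ x : X, ∑ k : Fin d, ‖Φ x (EuclideanSpace.single k 1)‖ ^ 2 ≤ κ ^ 2)
    (L : H →L[ℝ] H)
    (hL : ∀ f : H, L f = ∫ x, Φ x ((ContinuousLinearMap.adjoint (Φ x)) f) ∂ρ) :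
    L.IsPositive ∧ IsSelfAdjoint L ∧
      ∀ (ι : Type) (b : HilbertBasis ι ℝ H),
        Summable (fun i => ⟪b i, L (b i)⟫) ∧ (∑' i, ⟪b i, L (b i)⟫) ≤ κ ^ 2 := by
  rcases L.eq_zero_or_forall_integrable (T := fun x => Φ x ∘L adjoint (Φ x)) hL with rfl | hint
  · exact ⟨isPositive_zero, .zero _, fun ι b => by simpa using sq_nonneg κ⟩
  have hinner (f g : H) : ⟪L f, g⟫ = ∫ x, ⟪adjoint (Φ x) f, adjoint (Φ x) g⟫ ∂ρ := by
    rw [hL, inner_integral_apply_adjoint_apply (hint f)]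
  have hdiag (f : H) : ⟪f, L f⟫ = ∫ x, ‖adjoint (Φ x) f‖ ^ 2 ∂ρ := by
    rw [← real_inner_comm, hinner]
    simp_rw [real_inner_self_eq_norm_sq]
  have hpos : L.IsPositive := isPositive_of_inner_eq_integral hinner
  refine ⟨hpos, hpos.isSelfAdjoint, fun ι b => ?_⟩
  have hpartial (s : Finset ι) : ∑ i ∈ s, ⟪b i, L (b i)⟫ ≤ κ ^ 2 := by
    rw [Finset.sum_congr rfl fun i _ => hdiag (b i)]
    refine sum_integral_le_of_forall_sum_le (fun i _ => (hint (b i)).norm_adjoint_apply_sq)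
      fun x => ?_
    calc ∑ i ∈ s, ‖adjoint (Φ x) (b i)‖ ^ 2
        ≤ ∑ k, ‖Φ x (EuclideanSpace.basisFun (Fin d) ℝ k)‖ ^ 2 :=
          b.orthonormal.sum_norm_adjoint_apply_sq_le _ _ s
      _ ≤ κ ^ 2 := by simpa using htr x
  have hnonneg : 0 ≤ fun i => ⟪b i, L (b i)⟫ := fun i => hpos.inner_nonneg_right (b i)
  exact ⟨summable_of_sum_le hnonneg hpartial, Real.tsum_le_of_sum_le hnonneg hpartial⟩
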